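/- Fix 0 < ε < 0.1 and suppose W ∈ ℝ^{n×k} satisfies the Weight Distribution Condition with constant ε. Then for all nonzero x, y ∈ ℝ^k, |∠(W_{+,x}x, W_{+,y}y) − g(∠(x,y))| ≤ 4√ε, where g(θ) = arccos(((π − θ)cos θ + sin θ)/π). -/

import Mathlib

/-! Testing the Weight Distribution Condition on the pairs `(x, y)`, `(x, x)` and `(y, y)` puts
`⟨W_{+,x} x, W_{+,y} y⟩`, `‖W_{+,x} x‖²` and `‖W_{+,y} y‖²` within `ε‖x‖‖y‖`, `ε‖x‖²`, `ε‖y‖²` of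
`cos (g θ) ‖x‖‖y‖ / 2`, `‖x‖² / 2` and `‖y‖² / 2`. Hence the cosine of the output angle is within
`4ε` of `cos (g θ)`. For angles `β ≤ α` in `[0, π]` one has `2 sin² ((α - β) / 2) ≤ cos β - cos α`,
and `sin t ≥ 5t/6` on `[0, 1]` turns a cosine gap `4ε` into an angle gap `4√ε`. -/

open Real Matrix

/-- Spectral norm of a matrix, as the operator norm between Euclidean spaces. -/
noncomputable def spec {n k : ℕ} (M : Matrix (Fin n) (Fin k) ℝ) : ℝ :=
  ‖LinearMap.toContinuousLinearMap (Matrix.toEuclideanLin M)‖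

noncomputable def n2 {k : ℕ} (x : Fin k → ℝ) : ℝ := Real.sqrt (x ⬝ᵥ x)

/-- Angle between two vectors of `ℝ^k`. -/
noncomputable def ang {k : ℕ} (u v : Fin k → ℝ) : ℝ :=
  Real.arccos ((u ⬝ᵥ v) / (n2 u * n2 v))

/-- `W_{+,x} = diag(Wx > 0) W`: keep the rows of `W` that have positive inner product
with `x`, zeroing out the others. -/
noncomputable def Wplus {n k : ℕ} (W : Matrix (Fin n) (Fin k) ℝ) (x : Fin k → ℝ) :
    Matrix (Fin n) (Fin k) ℝ :=
  Matrix.of fun i j => if 0 < W.mulVec x i then W i j else 0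

/-- The Weight Distribution Condition with constant `ε`. -/
def WDC {n k : ℕ} (W : Matrix (Fin n) (Fin k) ℝ) (ε : ℝ) : Prop :=
  ∀ x y : Fin k → ℝ, x ≠ 0 → y ≠ 0 →
    ∃ M : Matrix (Fin k) (Fin k) ℝ,
      Mᵀ = M ∧
      M.mulVec ((n2 x)⁻¹ • x) = (n2 y)⁻¹ • y ∧
      M.mulVec ((n2 y)⁻¹ • y) = (n2 x)⁻¹ • x ∧
      (∀ z : Fin k → ℝ, z ⬝ᵥ x = 0 → z ⬝ᵥ y = 0 → M.mulVec z = 0) ∧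
      spec ((Wplus W x)ᵀ * (Wplus W y)
          - ((π - ang x y) / (2 * π)) • (1 : Matrix (Fin k) (Fin k) ℝ)
          - (Real.sin (ang x y) / (2 * π)) • M) ≤ ε

noncomputable def g (θ : ℝ) : ℝ :=
  Real.arccos (((π - θ) * Real.cos θ + Real.sin θ) / π)

section EuclideanBridge

variable {m k : ℕ}

lemma n2_eq_norm (x : Fin k → ℝ) : n2 x = ‖WithLp.toLp 2 x‖ := by
  rw [EuclideanSpace.norm_eq]
  simp [n2, dotProduct, sq]

lemma dotProduct_eq_inner (x y : Fin k → ℝ) :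
    x ⬝ᵥ y = inner ℝ (WithLp.toLp 2 x) (WithLp.toLp 2 y) := by
  rw [EuclideanSpace.inner_toLp_toLp, star_trivial, dotProduct_comm]

lemma ang_eq_angle (x y : Fin k → ℝ) :
    ang x y = InnerProductGeometry.angle (WithLp.toLp 2 x) (WithLp.toLp 2 y) := by
  rw [ang, InnerProductGeometry.angle, dotProduct_eq_inner, n2_eq_norm, n2_eq_norm]

lemma ang_nonneg (x y : Fin k → ℝ) : 0 ≤ ang x y := arccos_nonneg _

lemma ang_le_pi (x y : Fin k → ℝ) : ang x y ≤ π := arccos_le_pi _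

lemma n2_nonneg (x : Fin k → ℝ) : 0 ≤ n2 x := Real.sqrt_nonneg _

lemma n2_pos {x : Fin k → ℝ} (hx : x ≠ 0) : 0 < n2 x := by
  rwa [n2_eq_norm, norm_pos_iff, ne_eq, WithLp.toLp_eq_zero]

lemma n2_mul_self (x : Fin k → ℝ) : n2 x * n2 x = x ⬝ᵥ x := by
  rw [dotProduct_eq_inner, real_inner_self_eq_norm_mul_norm, n2_eq_norm]

lemma abs_dotProduct_le (x y : Fin k → ℝ) : |x ⬝ᵥ y| ≤ n2 x * n2 y := by
  rw [dotProduct_eq_inner, n2_eq_norm, n2_eq_norm]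
  exact abs_real_inner_le_norm _ _

lemma cos_ang (x y : Fin k → ℝ) : cos (ang x y) = x ⬝ᵥ y / (n2 x * n2 y) := by
  rw [ang_eq_angle, InnerProductGeometry.cos_angle, dotProduct_eq_inner, n2_eq_norm, n2_eq_norm]

lemma cos_ang_mul (x y : Fin k → ℝ) : cos (ang x y) * (n2 x * n2 y) = x ⬝ᵥ y := by
  rw [ang_eq_angle, n2_eq_norm, n2_eq_norm, InnerProductGeometry.cos_angle_mul_norm_mul_norm,
    dotProduct_eq_inner]

lemma ang_self {x : Fin k → ℝ} (hx : x ≠ 0) : ang x x = 0 := by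
  rw [ang_eq_angle, InnerProductGeometry.angle_self (by rwa [ne_eq, WithLp.toLp_eq_zero])]

lemma n2_mulVec_le (M : Matrix (Fin m) (Fin k) ℝ) (z : Fin k → ℝ) :
    n2 (M *ᵥ z) ≤ spec M * n2 z := by
  rw [n2_eq_norm, n2_eq_norm, spec, ← Matrix.toLin'_apply]
  exact (LinearMap.toContinuousLinearMap (Matrix.toEuclideanLin M)).le_opNorm _

lemma abs_dotProduct_mulVec_le (M : Matrix (Fin m) (Fin k) ℝ) (w : Fin m → ℝ) (z : Fin k → ℝ) :
    |w ⬝ᵥ M *ᵥ z| ≤ spec M * (n2 w * n2 z) :=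
  calc |w ⬝ᵥ M *ᵥ z| ≤ n2 w * n2 (M *ᵥ z) := abs_dotProduct_le _ _
    _ ≤ n2 w * (spec M * n2 z) := mul_le_mul_of_nonneg_left (n2_mulVec_le M z) (n2_nonneg w)
    _ = spec M * (n2 w * n2 z) := by ring

end EuclideanBridge

lemma two_mul_sin_sq_half_sub_le_cos_sub_cos {α β : ℝ} (hβ : 0 ≤ β) (hβα : β ≤ α) (hα : α ≤ π) :
    2 * sin ((α - β) / 2) ^ 2 ≤ cos β - cos α := by
  have hcos := cos_sub_cos β α
  rw [show (β + α) / 2 = (α + β) / 2 by ring, show (β - α) / 2 = -((α - β) / 2) by ring,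
    sin_neg] at hcos
  have hsin := sin_sub_sin ((α + β) / 2) ((α - β) / 2)
  rw [show ((α + β) / 2 - (α - β) / 2) / 2 = β / 2 by ring,
    show ((α + β) / 2 + (α - β) / 2) / 2 = α / 2 by ring] at hsin
  have h₁ : 0 ≤ sin ((α - β) / 2) := sin_nonneg_of_nonneg_of_le_pi (by linarith) (by linarith)
  have h₂ : 0 ≤ sin (β / 2) := sin_nonneg_of_nonneg_of_le_pi (by linarith) (by linarith)
  have h₃ : 0 ≤ cos (α / 2) := cos_nonneg_of_mem_Icc ⟨by linarith [pi_pos], by linarith⟩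
  nlinarith [mul_nonneg (mul_nonneg h₁ h₂) h₃]

lemma five_sixths_mul_le_sin {t : ℝ} (ht₀ : 0 ≤ t) (ht₁ : t ≤ 1) : 5 / 6 * t ≤ sin t := by
  rcases ht₀.eq_or_lt with rfl | ht₀
  · simp
  have := sin_gt_sub_cube ht₀
  nlinarith [mul_le_mul_of_nonneg_left (mul_le_one₀ ht₁ ht₀.le ht₁) ht₀.le]

lemma sub_le_two_mul_sqrt_of_cos_sub_cos_le {α β η : ℝ} (hβ : 0 ≤ β) (hβα : β ≤ α) (hα : α ≤ π)
    (hη : η ≤ 2 / 5) (h : cos β - cos α ≤ η) : α - β ≤ 2 * √η := by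
  set t := (α - β) / 2 with ht
  have ht₀ : 0 ≤ t := by linarith
  have htπ : t ≤ π / 2 := by linarith
  have hsin : 2 * sin t ^ 2 ≤ η := (two_mul_sin_sq_half_sub_le_cos_sub_cos hβ hβα hα).trans h
  -- Jordan's inequality `2 t / π ≤ sin t` and `sin t ^ 2 ≤ 1 / 5` force `t ≤ 1`.
  have ht₁ : t ≤ 1 := by
    by_contra! ht₁
    have hjordan := mul_le_sin ht₀ htπ
    have h2π : 3 / 5 < 2 / π := by
      rw [lt_div_iff₀ pi_pos]; linarith [pi_lt_d2]
    nlinarith [mul_lt_mul h2π ht₁.le one_pos (by positivity)]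
  have hη₀ : 0 ≤ η := by nlinarith
  rw [show α - β = 2 * t by ring, mul_le_mul_iff_right₀ two_pos, le_sqrt ht₀ hη₀]
  nlinarith [five_sixths_mul_le_sin ht₀ ht₁]

lemma abs_sub_le_two_mul_sqrt_of_abs_cos_sub_cos_le {α β η : ℝ} (hα₀ : 0 ≤ α) (hαπ : α ≤ π)
    (hβ₀ : 0 ≤ β) (hβπ : β ≤ π) (hη : η ≤ 2 / 5) (h : |cos α - cos β| ≤ η) :
    |α - β| ≤ 2 * √η := by
  rcases le_total β α with hβα | hαβ
  · rw [abs_of_nonneg (sub_nonneg.2 hβα)]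
    exact sub_le_two_mul_sqrt_of_cos_sub_cos_le hβ₀ hβα hαπ hη
      (by linarith [neg_abs_le (cos α - cos β)])
  · rw [abs_of_nonpos (sub_nonpos.2 hαβ), neg_sub]
    exact sub_le_two_mul_sqrt_of_cos_sub_cos_le hα₀ hαβ hβπ hη
      (by linarith [le_abs_self (cos α - cos β)])

noncomputable def gCos (θ : ℝ) : ℝ := ((π - θ) * cos θ + sin θ) / π

lemma gCos_zero : gCos 0 = 1 := by
  simp [gCos, pi_ne_zero]

lemma neg_one_le_gCos {θ : ℝ} (h₀ : 0 ≤ θ) (hπ : θ ≤ π) : -1 ≤ gCos θ := by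
  rw [gCos, le_div_iff₀ pi_pos]
  nlinarith [neg_one_le_cos θ, sin_nonneg_of_nonneg_of_le_pi h₀ hπ]

lemma gCos_le_one {θ : ℝ} (h₀ : 0 ≤ θ) (hπ : θ ≤ π) : gCos θ ≤ 1 := by
  rw [gCos, div_le_one pi_pos]
  nlinarith [cos_le_one θ, sin_le h₀]

lemma cos_g {θ : ℝ} (h₀ : 0 ≤ θ) (hπ : θ ≤ π) : cos (g θ) = gCos θ :=
  cos_arccos (neg_one_le_gCos h₀ hπ) (gCos_le_one h₀ hπ)

lemma abs_mul_sub_half_mul_le {a b A B ε : ℝ} (ha : 0 ≤ a) (hb : 0 ≤ b) (hA : 0 ≤ A) (hB : 0 ≤ B)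
    (hε₀ : 0 ≤ ε) (hε : ε ≤ 1 / 2) (hsa : |a * a - 1 / 2 * (A * A)| ≤ ε * (A * A))
    (hsb : |b * b - 1 / 2 * (B * B)| ≤ ε * (B * B)) :
    |a * b - 1 / 2 * (A * B)| ≤ ε * (A * B) := by
  obtain ⟨hsa₁, hsa₂⟩ := abs_le.1 hsa
  obtain ⟨hsb₁, hsb₂⟩ := abs_le.1 hsb
  have hup : a * b ≤ (1 / 2 + ε) * (A * B) := by
    refine (sq_le_sq₀ (by positivity) (by positivity)).1 ?_
    calc (a * b) ^ 2 = (a * a) * (b * b) := by ring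
      _ ≤ ((1 / 2 + ε) * (A * A)) * ((1 / 2 + ε) * (B * B)) :=
          mul_le_mul (by linarith) (by linarith) (by positivity) (by positivity)
      _ = ((1 / 2 + ε) * (A * B)) ^ 2 := by ring
  have hlo : (1 / 2 - ε) * (A * B) ≤ a * b := by
    have hε' : 0 ≤ 1 / 2 - ε := by linarith
    refine (sq_le_sq₀ (by positivity) (by positivity)).1 ?_
    calc ((1 / 2 - ε) * (A * B)) ^ 2 = ((1 / 2 - ε) * (A * A)) * ((1 / 2 - ε) * (B * B)) := by ring
      _ ≤ (a * a) * (b * b) :=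
          mul_le_mul (by linarith) (by linarith) (by positivity) (by positivity)
      _ = (a * b) ^ 2 := by ring
  rw [abs_le]; constructor <;> linarith

lemma abs_div_sub_le {p r s c ε : ℝ} (hs : 0 < s) (hpr : |p| ≤ r)
    (hr : |r - 1 / 2 * s| ≤ ε * s) (hp : |p - c / 2 * s| ≤ ε * s) : |p / r - c| ≤ 4 * ε := by
  have hC : |p / r| ≤ 1 := by
    rw [abs_div]; exact div_le_one_of_le₀ (hpr.trans (le_abs_self r)) (abs_nonneg r)
  have hCr : p / r * r = p := by
    rcases ((abs_nonneg p).trans hpr).eq_or_lt with rfl | hr₀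
    · rw [abs_nonpos_iff.1 hpr, zero_div, zero_mul]
    · exact div_mul_cancel₀ p hr₀.ne'
  refine le_of_mul_le_mul_right ?_ (half_pos hs)
  calc |p / r - c| * (s / 2) = |p / r * (1 / 2 * s - r) + (p - c / 2 * s)| := by
        rw [← abs_of_pos (half_pos hs), ← abs_mul]
        congr 1
        linear_combination hCr
    _ ≤ |p / r| * |1 / 2 * s - r| + |p - c / 2 * s| := by
        rw [← abs_mul]; exact abs_add_le _ _
    _ ≤ 1 * (ε * s) + ε * s :=
        add_le_add (mul_le_mul hC (by rwa [abs_sub_comm]) (abs_nonneg _) zero_le_one) hp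
    _ = 4 * ε * (s / 2) := by ring

namespace WDC

variable {n k : ℕ} {W : Matrix (Fin n) (Fin k) ℝ} {ε : ℝ}

lemma nonneg (hW : WDC W ε) {x : Fin k → ℝ} (hx : x ≠ 0) : 0 ≤ ε := by
  obtain ⟨M, -, -, -, -, hspec⟩ := hW x x hx hx
  exact (norm_nonneg _).trans hspec

lemma abs_dotProduct_sub_le (hW : WDC W ε) {x y : Fin k → ℝ} (hx : x ≠ 0) (hy : y ≠ 0) :
    |(Wplus W x *ᵥ x) ⬝ᵥ (Wplus W y *ᵥ y) - gCos (ang x y) / 2 * (n2 x * n2 y)|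
      ≤ ε * (n2 x * n2 y) := by
  obtain ⟨M, -, -, hMy, -, hspec⟩ := hW x y hx hy
  have hxMy : x ⬝ᵥ M *ᵥ y = n2 x * n2 y := by
    have hMy' : M *ᵥ y = n2 y • (n2 x)⁻¹ • x := by
      rw [← hMy, ← mulVec_smul, smul_inv_smul₀ (n2_pos hy).ne']
    rw [hMy', dotProduct_smul, dotProduct_smul, ← n2_mul_self, smul_eq_mul, smul_eq_mul]
    field_simp [(n2_pos hx).ne']
  set E := (Wplus W x)ᵀ * Wplus W y - ((π - ang x y) / (2 * π)) • (1 : Matrix (Fin k) (Fin k) ℝ)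
    - (sin (ang x y) / (2 * π)) • M
  have hE : x ⬝ᵥ E *ᵥ y
      = (Wplus W x *ᵥ x) ⬝ᵥ (Wplus W y *ᵥ y) - gCos (ang x y) / 2 * (n2 x * n2 y) := by
    simp only [E, sub_mulVec, smul_mulVec, one_mulVec, dotProduct_sub, dotProduct_smul, smul_eq_mul,
      hxMy, ← mulVec_mulVec, dotProduct_mulVec, vecMul_transpose, ← cos_ang_mul, gCos]
    field_simp
    ring
  rw [← hE]
  exact (abs_dotProduct_mulVec_le E x y).trans
    (mul_le_mul_of_nonneg_right hspec (mul_nonneg (n2_nonneg x) (n2_nonneg y)))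

lemma abs_n2_mul_self_sub_le (hW : WDC W ε) {x : Fin k → ℝ} (hx : x ≠ 0) :
    |n2 (Wplus W x *ᵥ x) * n2 (Wplus W x *ᵥ x) - 1 / 2 * (n2 x * n2 x)| ≤ ε * (n2 x * n2 x) := by
  simpa [n2_mul_self (Wplus W x *ᵥ x), ang_self hx, gCos_zero] using hW.abs_dotProduct_sub_le hx hx

end WDC

theorem wdc_angle_contraction_general {n k : ℕ} (W : Matrix (Fin n) (Fin k) ℝ) (ε : ℝ)
    (hε : ε < 0.1) (hW : WDC W ε)
    (x y : Fin k → ℝ) (hx : x ≠ 0) (hy : y ≠ 0) :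
    |ang ((Wplus W x).mulVec x) ((Wplus W y).mulVec y) - g (ang x y)| ≤ 4 * Real.sqrt ε := by
  set u := Wplus W x *ᵥ x
  set v := Wplus W y *ᵥ y
  have hε₀ := hW.nonneg hx
  have hnorms : |n2 u * n2 v - 1 / 2 * (n2 x * n2 y)| ≤ ε * (n2 x * n2 y) :=
    abs_mul_sub_half_mul_le (n2_nonneg u) (n2_nonneg v) (n2_nonneg x) (n2_nonneg y) hε₀
      (by norm_num at hε ⊢; linarith) (hW.abs_n2_mul_self_sub_le hx) (hW.abs_n2_mul_self_sub_le hy)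
  have hcos : |cos (ang u v) - cos (g (ang x y))| ≤ 4 * ε := by
    rw [cos_ang, cos_g (ang_nonneg x y) (ang_le_pi x y)]
    exact abs_div_sub_le (mul_pos (n2_pos hx) (n2_pos hy)) (abs_dotProduct_le u v) hnorms
      (hW.abs_dotProduct_sub_le hx hy)
  calc _ ≤ 2 * √(4 * ε) := abs_sub_le_two_mul_sqrt_of_abs_cos_sub_cos_le (ang_nonneg u v)
        (ang_le_pi u v) (arccos_nonneg _) (arccos_le_pi _) (by norm_num at hε ⊢; linarith) hcos
    _ = 4 * √ε := by
        rw [sqrt_mul' _ hε₀, show (4 : ℝ) = 2 ^ 2 by norm_num, sqrt_sq two_pos.le]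
        ring

theorem wdc_angle_contraction {n k : ℕ} (W : Matrix (Fin n) (Fin k) ℝ) (ε : ℝ)
    (hε0 : 0 < ε) (hε : ε < 0.1) (hW : WDC W ε)
    (x y : Fin k → ℝ) (hx : x ≠ 0) (hy : y ≠ 0) :
    |ang ((Wplus W x).mulVec x) ((Wplus W y).mulVec y) - g (ang x y)| ≤ 4 * Real.sqrt ε :=
  wdc_angle_contraction_general W ε hε hW x y hx hy
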